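/- arXiv:2001.10928 — 3 statements merged into one kernel-verified Lean document; each statement's English description precedes it below -/
import Mathlib

section
/- (Hardy-type bound on telescoped vertical differences.) For every u : (ℤ/kℤ) × {1,…,ℓ} → ℝ, with s(h) = ⌈h/c⌉, Σ_{p∈ℤ/kℤ} Σ_{h=1}^{⌊k/2⌋} ( (1/h) Σ_{i=1}^{s(h)−1} (u(p,i) − u(p,i+1)) )² ≤ (2π²/3) · Σ_{p∈ℤ/kℤ} Σ_{j=1}^{ℓ−1} (u(p,j) − u(p,j+1))². -/
/-!
In each column `p`, put `a i = u p i - u p (i + 1)` and `m = s(h) - 1 ≤ h / c`. Cauchy–Schwarz with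
weights `i ^ (-1/2)` and `∑_{i ≤ m} i ^ (-1/2) ≤ 2 √m` give
`(h⁻¹ ∑_{i ≤ m} a i)² ≤ (2 / √c) h ^ (-3/2) ∑_{i ≤ m} √i (a i)²`. Exchanging the order of summation,
`a i` is then weighted by `(2 / √c) √i ∑_{h > c i} h ^ (-3/2) ≤ (2 / √c) √i · 2 / √(c i) = 4 / c`,
and `4 / c ≤ 2π²/3`. The condition `k < 2 c ℓ` makes `s(h) - 1 ≤ ℓ - 1` for all `h ≤ k / 2`.
-/

open Real Finset

noncomputable section

/-- `s(h) = ⌈h/c⌉`, the ceiling of `h/c`. -/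
def ceilDivFun (c h : ℕ) : ℕ := (h + c - 1) / c

lemma inv_sqrt_add_one_le {x : ℝ} (hx : 0 ≤ x) :
    1 / √(x + 1) ≤ 2 * √(x + 1) - 2 * √x := by
  have hpos : 0 < √(x + 1) := sqrt_pos.2 (by linarith)
  have hsq : √(x + 1) ^ 2 = x + 1 := sq_sqrt (by linarith)
  rw [div_le_iff₀ hpos]
  nlinarith [two_mul_le_add_sq (√x) (√(x + 1)), sq_sqrt hx]

lemma inv_sqrt_mul_add_one_le {x : ℝ} (hx : 0 < x) :
    1 / (√(x + 1) * (x + 1)) ≤ 2 / √x - 2 / √(x + 1) := by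
  have hx' : 0 < √x := sqrt_pos.2 hx
  have hy : 0 < √(x + 1) := sqrt_pos.2 (by linarith)
  have hx2 : √x ^ 2 = x := sq_sqrt hx.le
  have hy2 : √(x + 1) ^ 2 = x + 1 := sq_sqrt (by linarith)
  rw [div_sub_div _ _ hx'.ne' hy.ne', div_le_div_iff₀ (by positivity) (by positivity)]
  nlinarith [mul_pos hx' hy, sq_nonneg (√(x + 1) - √x), mul_pos (mul_pos hx' hy) hy]

lemma sum_Icc_inv_sqrt_le (n : ℕ) : ∑ i ∈ Icc 1 n, 1 / √i ≤ 2 * √n := by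
  induction n with
  | zero => simp
  | succ n ih =>
    rw [sum_Icc_succ_top (by omega), Nat.cast_succ]
    linarith [inv_sqrt_add_one_le (Nat.cast_nonneg' n)]

lemma sum_Ioc_inv_sqrt_mul_self_le {n : ℕ} (hn : 0 < n) (M : ℕ) :
    ∑ h ∈ Ioc n M, 1 / (√h * h) ≤ 2 / √n := by
  rcases lt_or_ge M n with hM | hM
  · rw [Ioc_eq_empty (by omega), sum_empty]
    positivity
  have telescope : ∑ h ∈ Ioc n M, 1 / (√h * h) ≤ 2 / √n - 2 / √M := by
    induction M, hM using Nat.le_induction with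
    | base => simp
    | succ M hM ih =>
      have hMpos : (0 : ℝ) < M := by exact_mod_cast hn.trans_le hM
      rw [sum_Ioc_succ_top hM, Nat.cast_succ]
      linarith [inv_sqrt_mul_add_one_le hMpos]
  have : 0 ≤ 2 / √M := by positivity
  linarith

lemma sq_sum_Icc_le_two_sqrt_mul (m : ℕ) (a : ℕ → ℝ) :
    (∑ i ∈ Icc 1 m, a i) ^ 2 ≤ 2 * √m * ∑ i ∈ Icc 1 m, √i * a i ^ 2 := by
  have hcs : (∑ i ∈ Icc 1 m, a i) ^ 2
      ≤ (∑ i ∈ Icc 1 m, 1 / √i) * ∑ i ∈ Icc 1 m, √i * a i ^ 2 := by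
    refine sum_sq_le_sum_mul_sum_of_sq_le_mul _ (fun i _ => by positivity)
      (fun i _ => by positivity) fun i hi => ?_
    have : (0 : ℝ) < √i := sqrt_pos.2 (by exact_mod_cast (mem_Icc.1 hi).1)
    rw [← mul_assoc, one_div_mul_cancel this.ne', one_mul]
  calc (∑ i ∈ Icc 1 m, a i) ^ 2
      ≤ (∑ i ∈ Icc 1 m, 1 / √i) * ∑ i ∈ Icc 1 m, √i * a i ^ 2 := hcs
    _ ≤ 2 * √m * ∑ i ∈ Icc 1 m, √i * a i ^ 2 :=
        mul_le_mul_of_nonneg_right (sum_Icc_inv_sqrt_le m) (sum_nonneg fun i _ => by positivity)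

lemma mul_ceilDivFun_sub_one_le (c h : ℕ) : c * (ceilDivFun c h - 1) ≤ h := by
  unfold ceilDivFun
  have := Nat.div_mul_le_self (h + c - 1) c
  rw [Nat.mul_sub_one, mul_comm]
  omega

lemma le_ceilDivFun_sub_one_iff {c h i : ℕ} (hc : 0 < c) (hi : 1 ≤ i) :
    i ≤ ceilDivFun c h - 1 ↔ c * i < h := by
  unfold ceilDivFun
  rw [show i ≤ (h + c - 1) / c - 1 ↔ i + 1 ≤ (h + c - 1) / c by omega,
    Nat.le_div_iff_mul_le hc, add_mul, one_mul, mul_comm]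
  omega

lemma sq_inv_mul_sum_Icc_ceilDivFun_le {c h : ℕ} (hc : 0 < c) (hh : 0 < h) (a : ℕ → ℝ) :
    ((1 / (h : ℝ)) * ∑ i ∈ Icc 1 (ceilDivFun c h - 1), a i) ^ 2
      ≤ 2 / √c * (1 / (√h * h)) * ∑ i ∈ Icc 1 (ceilDivFun c h - 1), √i * a i ^ 2 := by
  set m := ceilDivFun c h - 1
  have hcR : (0 : ℝ) < c := by exact_mod_cast hc
  have hhR : (0 : ℝ) < h := by exact_mod_cast hh
  have hm : √m ≤ √h / √c := by
    rw [← sqrt_div hhR.le]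
    refine sqrt_le_sqrt ((le_div_iff₀ hcR).2 ?_)
    rw [mul_comm]
    exact_mod_cast mul_ceilDivFun_sub_one_le c h
  have hsh : √h * √h = h := mul_self_sqrt hhR.le
  have hweight : 2 * √m / (h : ℝ) ^ 2 ≤ 2 / √c * (1 / (√h * h)) := by
    calc 2 * √m / (h : ℝ) ^ 2 ≤ 2 * (√h / √c) / (h : ℝ) ^ 2 := by gcongr
      _ = 2 / √c * (1 / (√h * h)) := by
        field_simp
        linear_combination hsh
  calc ((1 / (h : ℝ)) * ∑ i ∈ Icc 1 m, a i) ^ 2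
      = (∑ i ∈ Icc 1 m, a i) ^ 2 / (h : ℝ) ^ 2 := by ring
    _ ≤ 2 * √m * (∑ i ∈ Icc 1 m, √i * a i ^ 2) / (h : ℝ) ^ 2 := by
        gcongr; exact sq_sum_Icc_le_two_sqrt_mul m a
    _ = 2 * √m / (h : ℝ) ^ 2 * ∑ i ∈ Icc 1 m, √i * a i ^ 2 := by ring
    _ ≤ 2 / √c * (1 / (√h * h)) * ∑ i ∈ Icc 1 m, √i * a i ^ 2 := by
        gcongr

lemma sum_Icc_sum_Icc_ceilDivFun_comm {c K L : ℕ} (hc : 0 < c) (hK : K ≤ c * (L + 1))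
    (f : ℕ → ℕ → ℝ) :
    ∑ h ∈ Icc 1 K, ∑ i ∈ Icc 1 (ceilDivFun c h - 1), f h i
      = ∑ i ∈ Icc 1 L, ∑ h ∈ Ioc (c * i) K, f h i := by
  refine sum_comm' fun h i => ?_
  simp only [mem_Icc, mem_Ioc]
  constructor
  · rintro ⟨⟨hh, hhK⟩, hi, him⟩
    have hci := (le_ceilDivFun_sub_one_iff hc hi).1 him
    refine ⟨⟨hci, hhK⟩, hi, ?_⟩
    by_contra!
    nlinarith
  · rintro ⟨⟨hci, hhK⟩, hi, -⟩
    exact ⟨⟨by omega, hhK⟩, hi, (le_ceilDivFun_sub_one_iff hc hi).2 hci⟩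

lemma sum_sq_inv_mul_sum_Icc_ceilDivFun_le {c K L : ℕ} (hc : 0 < c) (hK : K ≤ c * (L + 1))
    (a : ℕ → ℝ) :
    ∑ h ∈ Icc 1 K, ((1 / (h : ℝ)) * ∑ i ∈ Icc 1 (ceilDivFun c h - 1), a i) ^ 2
      ≤ 4 / c * ∑ i ∈ Icc 1 L, a i ^ 2 := by
  have hcR : (0 : ℝ) < c := by exact_mod_cast hc
  have hsc : √c * √c = c := mul_self_sqrt hcR.le
  have tail (i : ℕ) (hi : i ∈ Icc 1 L) :
      2 / √c * (∑ h ∈ Ioc (c * i) K, 1 / (√h * h)) * (√i * a i ^ 2) ≤ 4 / c * a i ^ 2 := by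
    have hi : 0 < i := (mem_Icc.1 hi).1
    calc 2 / √c * (∑ h ∈ Ioc (c * i) K, 1 / (√h * h)) * (√i * a i ^ 2)
        ≤ 2 / √c * (2 / √(c * i : ℕ)) * (√i * a i ^ 2) := by
          gcongr
          exact sum_Ioc_inv_sqrt_mul_self_le (Nat.mul_pos hc hi) K
      _ = 4 / c * a i ^ 2 := by
          rw [Nat.cast_mul, sqrt_mul hcR.le]
          field_simp
          linear_combination -4 * a i ^ 2 * hsc
  calc ∑ h ∈ Icc 1 K, ((1 / (h : ℝ)) * ∑ i ∈ Icc 1 (ceilDivFun c h - 1), a i) ^ 2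
      ≤ ∑ h ∈ Icc 1 K, ∑ i ∈ Icc 1 (ceilDivFun c h - 1),
          2 / √c * (1 / (√h * h)) * (√i * a i ^ 2) := by
        gcongr with h hh
        rw [← mul_sum]
        exact sq_inv_mul_sum_Icc_ceilDivFun_le hc (mem_Icc.1 hh).1 a
    _ = ∑ i ∈ Icc 1 L, 2 / √c * (∑ h ∈ Ioc (c * i) K, 1 / (√h * h)) * (√i * a i ^ 2) := by
        rw [sum_Icc_sum_Icc_ceilDivFun_comm hc hK]
        simp only [mul_sum, sum_mul]
    _ ≤ 4 / c * ∑ i ∈ Icc 1 L, a i ^ 2 := by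
        rw [mul_sum]
        exact sum_le_sum tail

theorem hardy_vertical_bound_general (k ℓ c : ℕ) [NeZero k]
    (h2 : k < 2 * c * ℓ)
    (u : ZMod k → ℕ → ℝ) :
    ∑ p : ZMod k, ∑ h ∈ Finset.Icc 1 (k / 2),
      ((1 / (h : ℝ)) * ∑ i ∈ Finset.Icc 1 (ceilDivFun c h - 1), (u p i - u p (i + 1))) ^ 2
    ≤ (2 * π ^ 2 / 3) *
      ∑ p : ZMod k, ∑ j ∈ Finset.Icc 1 (ℓ - 1), (u p j - u p (j + 1)) ^ 2 := by
  rw [mul_assoc] at h2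
  have hcℓ : 0 < c * ℓ := by omega
  have hc : 0 < c := Nat.pos_of_mul_pos_right hcℓ
  have hℓ : 0 < ℓ := Nat.pos_of_mul_pos_left hcℓ
  have hK : k / 2 ≤ c * (ℓ - 1 + 1) := by
    rw [Nat.sub_add_cancel hℓ]
    omega
  have hconst : 4 / (c : ℝ) ≤ 2 * π ^ 2 / 3 := by
    have hc1 : (1 : ℝ) ≤ c := by exact_mod_cast hc
    calc 4 / (c : ℝ) ≤ 4 := div_le_self (by norm_num) hc1
      _ ≤ 2 * π ^ 2 / 3 := by nlinarith [pi_gt_three]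
  rw [mul_sum]
  gcongr with p
  calc _ ≤ 4 / (c : ℝ) * ∑ j ∈ Icc 1 (ℓ - 1), (u p j - u p (j + 1)) ^ 2 :=
        sum_sq_inv_mul_sum_Icc_ceilDivFun_le hc hK fun i => u p i - u p (i + 1)
    _ ≤ _ := by gcongr

/-- Hardy-type bound on telescoped vertical differences: for every
`u : (ℤ/kℤ) × {1,…,ℓ} → ℝ`, with `s(h) = ⌈h/c⌉`,
`Σ_{p∈ℤ/kℤ} Σ_{h=1}^{⌊k/2⌋} ( (1/h) Σ_{i=1}^{s(h)−1} (u(p,i) − u(p,i+1)) )²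
  ≤ (2π²/3) · Σ_{p∈ℤ/kℤ} Σ_{j=1}^{ℓ−1} (u(p,j) − u(p,j+1))²`. -/
theorem hardy_vertical_bound (k ℓ c : ℕ) [NeZero k]
    (h1 : 4 * ℓ < k) (h2 : k < 2 * c * ℓ)
    (u : ZMod k → ℕ → ℝ) :
    ∑ p : ZMod k, ∑ h ∈ Finset.Icc 1 (k / 2),
      ((1 / (h : ℝ)) * ∑ i ∈ Finset.Icc 1 (ceilDivFun c h - 1), (u p i - u p (i + 1))) ^ 2
    ≤ (2 * π ^ 2 / 3) *
      ∑ p : ZMod k, ∑ j ∈ Finset.Icc 1 (ℓ - 1), (u p j - u p (j + 1)) ^ 2 :=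
  hardy_vertical_bound_general k ℓ c h2 u
end
end

section
/- (Averaged horizontal differences bound.) For every u : (ℤ/kℤ) × {1,…,ℓ} → ℝ, with s(h) = ⌈h/c⌉, Σ_{p∈ℤ/kℤ} Σ_{h=1}^{⌊k/2⌋} ( (1/h) Σ_{i=1}^{h} (u(p+i, s(h)) − u(p+i−1, s(h))) )² ≤ c · Σ_{p∈ℤ/kℤ} Σ_{j=1}^{ℓ} (u(p+1,j) − u(p,j))². -/
open Real Finset

noncomputable section

private lemma shift_sum {k : ℕ} [NeZero k] (F : ZMod k → ℝ) (t : ZMod k) :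
    ∑ p : ZMod k, F (p + t) = ∑ p : ZMod k, F p :=
  Fintype.sum_equiv (Equiv.addRight t) (fun p => F (p + t)) F (fun _ => rfl)

/-- Averaged horizontal differences bound: for every
`u : (ℤ/kℤ) × {1,…,ℓ} → ℝ`, with `s(h) = ⌈h/c⌉`,
`Σ_{p∈ℤ/kℤ} Σ_{h=1}^{⌊k/2⌋} ( (1/h) Σ_{i=1}^{h} (u(p+i, s(h)) − u(p+i−1, s(h))) )²
  ≤ c · Σ_{p∈ℤ/kℤ} Σ_{j=1}^{ℓ} (u(p+1,j) − u(p,j))²`. -/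
theorem averaged_horizontal_bound (k ℓ c : ℕ) [NeZero k]
    (h1 : 4 * ℓ < k) (h2 : k < 2 * c * ℓ)
    (u : ZMod k → ℕ → ℝ) :
    ∑ p : ZMod k, ∑ h ∈ Finset.Icc 1 (k / 2),
      ((1 / (h : ℝ)) * ∑ i ∈ Finset.Icc 1 h,
        (u (p + (i : ZMod k)) (ceilDivFun c h) - u (p + (i : ZMod k) - 1) (ceilDivFun c h))) ^ 2
    ≤ (c : ℝ) * ∑ p : ZMod k, ∑ j ∈ Finset.Icc 1 ℓ, (u (p + 1) j - u p j) ^ 2 := by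
  have hc : 0 < c := by
    rcases Nat.eq_zero_or_pos c with rfl | hc
    · simp at h2
    · exact hc
  have hkl : k / 2 < c * ℓ := by
    have h2' : k < 2 * (c * ℓ) := by linarith
    generalize c * ℓ = x at h2' ⊢
    omega
  set D : ℕ → ℝ := fun j => ∑ p : ZMod k, (u (p + 1) j - u p j) ^ 2 with hD
  have hD0 : ∀ j, 0 ≤ D j := fun j => Finset.sum_nonneg fun p _ => sq_nonneg _
  -- shift invariance : for any level s and any i, the shifted difference sum is D s
  have hshift : ∀ (s : ℕ) (i : ZMod k),
      ∑ p : ZMod k, (u (p + i) s - u (p + i - 1) s) ^ 2 = D s := by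
    intro s i
    show _ = ∑ p : ZMod k, (u (p + 1) s - u p s) ^ 2
    have key := shift_sum (fun q => (u (q + 1) s - u q s) ^ 2) (i - 1)
    rw [← key]
    apply Finset.sum_congr rfl
    intro p _
    have e1 : p + (i - 1) + 1 = p + i := by ring
    have e2 : p + (i - 1) = p + i - 1 := by ring
    rw [e1, e2]
  -- step 1 : for each h, the inner sum over p is at most D (ceilDivFun c h)
  have step1 : ∀ h ∈ Finset.Icc 1 (k / 2),
      ∑ p : ZMod k, ((1 / (h : ℝ)) * ∑ i ∈ Finset.Icc 1 h,
        (u (p + (i : ZMod k)) (ceilDivFun c h) - u (p + (i : ZMod k) - 1) (ceilDivFun c h))) ^ 2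
      ≤ D (ceilDivFun c h) := by
    intro h hh
    simp only [Finset.mem_Icc] at hh
    have hh1 : (1 : ℕ) ≤ h := hh.1
    have hhR : (0 : ℝ) < (h : ℝ) := by exact_mod_cast hh1
    set s := ceilDivFun c h with hs
    calc ∑ p : ZMod k, ((1 / (h : ℝ)) * ∑ i ∈ Finset.Icc 1 h,
            (u (p + (i : ZMod k)) s - u (p + (i : ZMod k) - 1) s)) ^ 2
        ≤ ∑ p : ZMod k, (1 / (h : ℝ)) * ∑ i ∈ Finset.Icc 1 h,
            (u (p + (i : ZMod k)) s - u (p + (i : ZMod k) - 1) s) ^ 2 := by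
          apply Finset.sum_le_sum
          intro p _
          have CS := sq_sum_le_card_mul_sum_sq
            (s := Finset.Icc 1 h)
            (f := fun i => (u (p + (i : ZMod k)) s - u (p + (i : ZMod k) - 1) s))
          rw [Nat.card_Icc] at CS
          simp only [Nat.add_sub_cancel] at CS
          have CS' : (∑ i ∈ Finset.Icc 1 h,
              (u (p + (i : ZMod k)) s - u (p + (i : ZMod k) - 1) s)) ^ 2
              ≤ (h : ℝ) * ∑ i ∈ Finset.Icc 1 h,
                (u (p + (i : ZMod k)) s - u (p + (i : ZMod k) - 1) s) ^ 2 := by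
            exact_mod_cast CS
          have e : ((1 / (h : ℝ)) * ∑ i ∈ Finset.Icc 1 h,
              (u (p + (i : ZMod k)) s - u (p + (i : ZMod k) - 1) s)) ^ 2
              = (∑ i ∈ Finset.Icc 1 h,
                (u (p + (i : ZMod k)) s - u (p + (i : ZMod k) - 1) s)) ^ 2 / (h : ℝ) ^ 2 := by
            field_simp
          rw [e, div_le_iff₀ (by positivity)]
          have e2 : (1 / (h : ℝ) * ∑ i ∈ Finset.Icc 1 h,
              (u (p + (i : ZMod k)) s - u (p + (i : ZMod k) - 1) s) ^ 2) * (h : ℝ) ^ 2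
              = (h : ℝ) * ∑ i ∈ Finset.Icc 1 h,
                (u (p + (i : ZMod k)) s - u (p + (i : ZMod k) - 1) s) ^ 2 := by
            field_simp
          rw [e2]
          exact CS'
      _ = (1 / (h : ℝ)) * ∑ i ∈ Finset.Icc 1 h, ∑ p : ZMod k,
            (u (p + (i : ZMod k)) s - u (p + (i : ZMod k) - 1) s) ^ 2 := by
          rw [← Finset.mul_sum, Finset.sum_comm]
      _ = (1 / (h : ℝ)) * ∑ i ∈ Finset.Icc 1 h, D s := by
          congr 1
          exact Finset.sum_congr rfl fun i _ => hshift s (i : ZMod k)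
      _ = D s := by
          rw [Finset.sum_const, Nat.card_Icc]
          simp only [Nat.add_sub_cancel, nsmul_eq_mul]
          field_simp
  -- swap the outer sums and apply step 1
  rw [Finset.sum_comm]
  have step2 : ∑ h ∈ Finset.Icc 1 (k / 2), ∑ p : ZMod k,
      ((1 / (h : ℝ)) * ∑ i ∈ Finset.Icc 1 h,
        (u (p + (i : ZMod k)) (ceilDivFun c h) - u (p + (i : ZMod k) - 1) (ceilDivFun c h))) ^ 2
      ≤ ∑ h ∈ Finset.Icc 1 (k / 2), D (ceilDivFun c h) :=
    Finset.sum_le_sum step1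
  refine le_trans step2 ?_
  -- step 3 : fiber counting
  have hmem : ∀ h ∈ Finset.Icc 1 (k / 2), ceilDivFun c h ∈ Finset.Icc 1 ℓ := by
    intro h hh
    simp only [Finset.mem_Icc] at hh ⊢
    constructor
    · rw [ceilDivFun, Nat.le_div_iff_mul_le hc]
      omega
    · have hcl : h < c * ℓ := lt_of_le_of_lt hh.2 hkl
      have hlt : (h + c - 1) / c < ℓ + 1 := by
        rw [Nat.div_lt_iff_lt_mul hc]
        have e : (ℓ + 1) * c = c * ℓ + c := by ring
        rw [e]
        generalize c * ℓ = x at hcl ⊢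
        omega
      rw [ceilDivFun]
      omega
  have hfiber : ∀ j ∈ Finset.Icc 1 ℓ,
      ((Finset.Icc 1 (k / 2)).filter (fun h => ceilDivFun c h = j)).card ≤ c := by
    intro j hj
    simp only [Finset.mem_Icc] at hj
    have hsub : ((Finset.Icc 1 (k / 2)).filter (fun h => ceilDivFun c h = j))
        ⊆ Finset.Icc (j * c + 1 - c) (j * c) := by
      intro h hh
      simp only [Finset.mem_filter, Finset.mem_Icc] at hh ⊢
      obtain ⟨⟨hh1, _⟩, hj'⟩ := hh
      have d1 : j * c ≤ h + c - 1 := by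
        rw [← hj', ceilDivFun]
        exact Nat.div_mul_le_self _ _
      have d2 : h + c - 1 < (j + 1) * c := by
        have hlt : (h + c - 1) / c < j + 1 := by
          rw [ceilDivFun] at hj'
          exact hj'.le.trans_lt (Nat.lt_succ_self j)
        rw [Nat.div_lt_iff_lt_mul hc] at hlt
        exact hlt
      rw [Nat.add_mul, one_mul] at d2
      obtain ⟨x, hx⟩ : ∃ x, j * c = x := ⟨_, rfl⟩
      rw [hx] at d1 d2 ⊢
      omega
    calc ((Finset.Icc 1 (k / 2)).filter (fun h => ceilDivFun c h = j)).card
        ≤ (Finset.Icc (j * c + 1 - c) (j * c)).card := Finset.card_le_card hsub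
      _ ≤ c := by
          rw [Nat.card_Icc]
          obtain ⟨x, hx⟩ : ∃ x, j * c = x := ⟨_, rfl⟩
          rw [hx]
          omega
  -- conclude with sum_comp
  have hRHS : (c : ℝ) * ∑ p : ZMod k, ∑ j ∈ Finset.Icc 1 ℓ, (u (p + 1) j - u p j) ^ 2
      = ∑ j ∈ Finset.Icc 1 ℓ, (c : ℝ) * D j := by
    rw [Finset.sum_comm, Finset.mul_sum]
  rw [hRHS]
  rw [Finset.sum_comp D (fun h => ceilDivFun c h)]
  have himg : (Finset.Icc 1 (k / 2)).image (fun h => ceilDivFun c h) ⊆ Finset.Icc 1 ℓ := by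
    intro j hj
    rw [Finset.mem_image] at hj
    obtain ⟨h, hh, rfl⟩ := hj
    exact hmem h hh
  calc ∑ j ∈ (Finset.Icc 1 (k / 2)).image (fun h => ceilDivFun c h),
        ((Finset.Icc 1 (k / 2)).filter (fun h => ceilDivFun c h = j)).card • D j
      ≤ ∑ j ∈ Finset.Icc 1 ℓ,
        ((Finset.Icc 1 (k / 2)).filter (fun h => ceilDivFun c h = j)).card • D j := by
        apply Finset.sum_le_sum_of_subset_of_nonneg himg
        intro j _ _
        exact nsmul_nonneg (hD0 j) _
    _ ≤ ∑ j ∈ Finset.Icc 1 ℓ, (c : ℝ) * D j := by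
        apply Finset.sum_le_sum
        intro j hj
        rw [nsmul_eq_mul]
        exact mul_le_mul_of_nonneg_right (by exact_mod_cast hfiber j hj) (hD0 j)
end
end

section
/- (The circular embedding minimizes the L_n^{1/2}-energy.) Let X_C ∈ ℝ^{n×2} have rows (X_C)_{j,·} = √(2/n)·(cos(2πj/n), sin(2πj/n)), j = 1,…,n. Then X_Cᵀ X_C = I₂, X_Cᵀ 𝟏ₙ = 0, Tr(X_Cᵀ L_n^{1/2} X_C) = 4 sin(π/n), and for every X ∈ ℝ^{n×2} with Xᵀ X = I₂ and Xᵀ 𝟏ₙ = 0 one has Tr(Xᵀ L_n^{1/2} X) ≥ 4 sin(π/n). -/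
open Real Matrix

noncomputable section

/-- The Laplacian of the `n`-cycle. -/
def cycLap (n : ℕ) : Matrix (ZMod n) (ZMod n) ℝ :=
  Matrix.of fun i j => if i = j then 2 else if i = j + 1 ∨ j = i + 1 then -1 else 0

/-- The circular embedding: rows `(X_C)_{j,·} = √(2/n)·(cos(2πj/n), sin(2πj/n))`. -/
def circEmb (n : ℕ) : Matrix (ZMod n) (Fin 2) ℝ :=
  Matrix.of fun j t =>
    Real.sqrt (2 / (n : ℝ)) *
      (if t = 0 then Real.cos (2 * π * (j.val : ℝ) / n)
       else Real.sin (2 * π * (j.val : ℝ) / n))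

/-- The square root `Matrix.PosSemidef.sqrt` of the older Mathlib, spelled out (it is gone now). -/
def psdSqrt {m : Type*} [Fintype m] [DecidableEq m] {A : Matrix m m ℝ}
    (hA : A.PosSemidef) : Matrix m m ℝ :=
  hA.1.eigenvectorUnitary.1 * diagonal ((↑) ∘ (√·) ∘ hA.1.eigenvalues) *
  (star hA.1.eigenvectorUnitary : Matrix m m ℝ)

/-!
The columns of `X_C` are the real and imaginary parts of the character `j ↦ exp (2πij/n)`,
an eigenvector of `L_n` for the eigenvalue `2 - 2 cos (2π/n) = (2 sin (π/n))²`; hence `L_n^{1/2}`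
multiplies them by `2 sin (π/n)`, and the identities for `X_C` follow from orthogonality of
characters. For the lower bound, the discrete Fourier transform diagonalises `L_n` with
eigenvalues `(2 sin (πk/n))²`, so an eigenvector of `L_n` orthogonal to `𝟏` has eigenvalue at
least `(2 sin (π/n))²`, and an eigenvector with a smaller eigenvalue is constant. Expanding a
column `v ⊥ 𝟏` of `X` in the eigenbasis of `L_n` that defines `L_n^{1/2}` gives
`vᵀ L_n^{1/2} v ≥ 2 sin (π/n) ‖v‖²`.
-/

open ZMod

namespace Matrix

lemma trace_transpose_mul_mul {m k R : Type*} [Fintype m] [Fintype k] [CommSemiring R]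
    (X : Matrix m k R) (B : Matrix m m R) :
    (Xᵀ * B * X).trace = ∑ t, Xᵀ t ⬝ᵥ (B *ᵥ Xᵀ t) := by
  simp only [trace, diag, mul_apply', dotProduct_mulVec]
  rfl

variable {m : Type*} [Fintype m]

lemma PosSemidef.mulVec_eq_smul_of_mul_self_mulVec {B : Matrix m m ℝ} (hB : B.PosSemidef)
    {v : m → ℝ} {s : ℝ} (hs : 0 < s) (hv : (B * B) *ᵥ v = s ^ 2 • v) :
    B *ᵥ v = s • v := by
  set w := B *ᵥ v - s • v
  -- `(B + s) w = (B² - s²) v = 0`, and `B + s` is positive definite.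
  have hw : B *ᵥ w = -s • w := by
    simp only [w, mulVec_sub, mulVec_smul, mulVec_mulVec, hv, smul_sub, smul_smul]
    module
  have h : s * (w ⬝ᵥ w) + w ⬝ᵥ (B *ᵥ w) = 0 := by
    rw [hw, dotProduct_smul, smul_eq_mul]; ring
  have hBw : 0 ≤ w ⬝ᵥ (B *ᵥ w) := by simpa using hB.dotProduct_mulVec_nonneg w
  have hww : w ⬝ᵥ w = 0 := by
    nlinarith [show 0 ≤ w ⬝ᵥ w by simpa using dotProduct_star_self_nonneg w]
  exact sub_eq_zero.mp (dotProduct_self_eq_zero.mp hww)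

variable [DecidableEq m] {A : Matrix m m ℝ}

lemma IsHermitian.star_eigenvectorUnitary_mulVec_apply (hA : A.IsHermitian) (v : m → ℝ)
    (i : m) :
    ((star hA.eigenvectorUnitary : Matrix m m ℝ) *ᵥ v) i =
      (hA.eigenvectorBasis i).ofLp ⬝ᵥ v := by
  simp [mulVec, dotProduct]

lemma IsHermitian.sum_sq_eigenvectorBasis_dotProduct (hA : A.IsHermitian) (v : m → ℝ) :
    ∑ i, ((hA.eigenvectorBasis i).ofLp ⬝ᵥ v) ^ 2 = v ⬝ᵥ v := by
  have := hA.eigenvectorBasis.sum_inner_mul_inner (WithLp.toLp 2 v) (WithLp.toLp 2 v)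
  simp only [EuclideanSpace.inner_eq_star_dotProduct] at this
  simpa [sq, dotProduct_comm] using this

lemma psdSqrt_posSemidef (hA : A.PosSemidef) : (psdSqrt hA).PosSemidef := by
  have hd : (diagonal ((↑) ∘ (√·) ∘ hA.1.eigenvalues) : Matrix m m ℝ).PosSemidef :=
    posSemidef_diagonal_iff.mpr fun i ↦ by simp [Real.sqrt_nonneg]
  exact hd.mul_mul_conjTranspose_same hA.1.eigenvectorUnitary.1

lemma psdSqrt_mul_self (hA : A.PosSemidef) : psdSqrt hA * psdSqrt hA = A := by
  have hU : (star hA.1.eigenvectorUnitary : Matrix m m ℝ) * hA.1.eigenvectorUnitary.1 = 1 :=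
    Unitary.coe_star_mul_self _
  have hD : (diagonal ((↑) ∘ (√·) ∘ hA.1.eigenvalues) : Matrix m m ℝ) *
      diagonal ((↑) ∘ (√·) ∘ hA.1.eigenvalues) =
        diagonal (RCLike.ofReal ∘ hA.1.eigenvalues) := by
    rw [diagonal_mul_diagonal]; congr 1; funext i
    simp [Real.mul_self_sqrt (hA.eigenvalues_nonneg i)]
  conv_rhs => rw [hA.1.spectral_theorem, Unitary.conjStarAlgAut_apply, ← hD]
  simp only [psdSqrt, mul_assoc]
  rw [← mul_assoc (star _ : Matrix m m ℝ) _ (_ * _), hU, one_mul]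

lemma dotProduct_psdSqrt_mulVec (hA : A.PosSemidef) (v : m → ℝ) :
    v ⬝ᵥ (psdSqrt hA *ᵥ v) =
      ∑ i, √(hA.1.eigenvalues i) * ((hA.1.eigenvectorBasis i).ofLp ⬝ᵥ v) ^ 2 := by
  have hU : v ᵥ* (hA.1.eigenvectorUnitary : Matrix m m ℝ) =
      (star hA.1.eigenvectorUnitary : Matrix m m ℝ) *ᵥ v := by
    rw [star_eq_conjTranspose, conjTranspose_eq_transpose_of_trivial, mulVec_transpose]
  rw [psdSqrt, ← mulVec_mulVec, ← mulVec_mulVec, dotProduct_mulVec, hU, dotProduct]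
  refine Finset.sum_congr rfl fun i _ ↦ ?_
  rw [mulVec_diagonal, hA.1.star_eigenvectorUnitary_mulVec_apply]
  simp only [Function.comp_apply]
  ring

lemma le_dotProduct_psdSqrt_mulVec (hA : A.PosSemidef) {v : m → ℝ} {c : ℝ}
    (h : ∀ i, c ^ 2 ≤ hA.1.eigenvalues i ∨ (hA.1.eigenvectorBasis i).ofLp ⬝ᵥ v = 0) :
    c * (v ⬝ᵥ v) ≤ v ⬝ᵥ (psdSqrt hA *ᵥ v) := by
  rw [dotProduct_psdSqrt_mulVec, ← hA.1.sum_sq_eigenvectorBasis_dotProduct, Finset.mul_sum]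
  refine Finset.sum_le_sum fun i _ ↦ ?_
  rcases h i with hi | hi
  · exact mul_le_mul_of_nonneg_right (Real.le_sqrt_of_sq_le hi) (sq_nonneg _)
  · simp [hi]

end Matrix

lemma Real.sin_pi_div_pos {n : ℕ} (hn : 2 ≤ n) : 0 < sin (π / n) :=
  sin_pos_of_pos_of_lt_pi (by positivity) (div_lt_self pi_pos (by exact_mod_cast hn))

lemma Real.sin_pi_div_le_sin_pi_mul_div {N k : ℕ} (hk : 0 < k) (hkN : k < N) :
    sin (π / N) ≤ sin (π * k / N) := by
  have hN : (0 : ℝ) < N := by exact_mod_cast hk.trans hkN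
  wlog h : 2 * k ≤ N generalizing k
  · have hsym := this (k := N - k) (by omega) (by omega) (by omega)
    rwa [Nat.cast_sub hkN.le, mul_sub, sub_div, mul_div_cancel_right₀ _ hN.ne', sin_pi_sub]
      at hsym
  have hk1 : (1 : ℝ) ≤ k := by exact_mod_cast hk
  have h2 : 2 * (k : ℝ) ≤ N := by exact_mod_cast h
  apply sin_le_sin_of_le_of_le_pi_div_two
  · linarith [show 0 ≤ π / N by positivity, pi_pos]
  · rw [div_le_div_iff₀ hN two_pos]; nlinarith [pi_pos]
  · gcongr; nlinarith [pi_pos]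

namespace ZMod

lemma two_ne_zero_of_three_le {n : ℕ} (hn : 3 ≤ n) : (2 : ZMod n) ≠ 0 := by
  have := (natCast_eq_zero_iff 2 n).not.mpr (Nat.not_dvd_of_pos_of_lt two_pos (by omega))
  exact_mod_cast this

variable {N : ℕ} [NeZero N]

lemma dft_comp_add_right {E : Type*} [AddCommGroup E] [Module ℂ E] (Φ : ZMod N → E)
    (a k : ZMod N) : 𝓕 (fun j ↦ Φ (j + a)) k = stdAddChar (a * k) • 𝓕 Φ k := by
  simp only [dft_apply, Finset.smul_sum, smul_smul, ← AddChar.map_add_eq_mul]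
  exact Fintype.sum_equiv (Equiv.addRight a) _ _ fun j ↦ by
    simp only [Equiv.coe_addRight]; congr 3; ring

lemma stdAddChar_eq_exp (j : ZMod N) :
    stdAddChar j = Complex.exp ((2 * π * j.val / N : ℝ) * Complex.I) := by
  rw [stdAddChar_apply, toCircle_apply]; push_cast; ring_nf

lemma re_sq_add_im_sq_stdAddChar (j : ZMod N) :
    (stdAddChar j).re ^ 2 + (stdAddChar j).im ^ 2 = 1 := by
  rw [sq, sq, ← Complex.normSq_apply, stdAddChar_apply, Circle.normSq_coe]

lemma sum_stdAddChar_mul_eq_zero {b : ZMod N} (hb : b ≠ 0) : ∑ j, stdAddChar (j * b) = 0 := by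
  simp [AddChar.sum_mulShift b (isPrimitive_stdAddChar N), hb]

lemma two_sub_stdAddChar_sub_stdAddChar_neg (k : ZMod N) :
    2 - stdAddChar k - stdAddChar (-k) = ((2 * Real.sin (π * k.val / N)) ^ 2 : ℝ) := by
  set x := π * k.val / N
  have hψ : stdAddChar k + stdAddChar (-k) = 2 * Complex.cos (2 * x) := by
    rw [AddChar.map_neg_eq_inv, stdAddChar_apply, toCircle_apply, ← Complex.exp_neg,
      Complex.two_cos]
    simp only [x]; push_cast; ring_nf
  have hsin : (2 * Real.sin x) ^ 2 = 2 - 2 * Real.cos (2 * x) := by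
    rw [Real.cos_two_mul]; linear_combination 4 * Real.sin_sq_add_cos_sq x
  rw [hsin, sub_sub, hψ]
  push_cast
  ring

end ZMod

lemma cycLap_apply {n : ℕ} (hn : 3 ≤ n) (i j : ZMod n) :
    cycLap n i j = 2 * (if j = i then 1 else 0) - (if j = i - 1 then 1 else 0)
      - (if j = i + 1 then 1 else 0) := by
  have h1 : (1 : ZMod n) ≠ 0 := by
    have : Fact (1 < n) := ⟨by omega⟩
    exact one_ne_zero
  have h2 := two_ne_zero_of_three_le hn
  have hl : i - 1 ≠ i := fun h ↦ h1 (by linear_combination -h)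
  have hr : i + 1 ≠ i := fun h ↦ h1 (by linear_combination h)
  have hlr : i - 1 ≠ i + 1 := fun h ↦ h2 (by linear_combination -h)
  have hor : (i = j + 1 ∨ j = i + 1) ↔ (j = i - 1 ∨ j = i + 1) := by
    rw [eq_sub_iff_add_eq, eq_comm (a := i)]
  simp only [cycLap, of_apply, hor]
  by_cases hi : j = i
  · simp [hi, hl.symm, hr.symm]
  by_cases hm : j = i - 1
  · simp [hm, hl.symm, hlr, h1]
  by_cases hp : j = i + 1
  · simp [hp, hr.symm, hlr.symm, h1]
  simp [hi, hm, hp, Ne.symm hi]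

section CycleLaplacian

variable {n : ℕ} [NeZero n]

lemma cycLap_mulVec (hn : 3 ≤ n) (v : ZMod n → ℝ) (i : ZMod n) :
    (cycLap n *ᵥ v) i = 2 * v i - v (i - 1) - v (i + 1) := by
  simp [mulVec, dotProduct, cycLap_apply hn, sub_mul, Finset.sum_sub_distrib, ite_mul]

lemma sum_cycLap_mulVec (hn : 3 ≤ n) (v : ZMod n → ℝ) : ∑ i, (cycLap n *ᵥ v) i = 0 := by
  have hl : ∑ i, v (i - 1) = ∑ i, v i := Equiv.sum_comp (Equiv.subRight 1) v
  have hr : ∑ i, v (i + 1) = ∑ i, v i := Equiv.sum_comp (Equiv.addRight 1) v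
  simp only [cycLap_mulVec hn, Finset.sum_sub_distrib, ← Finset.mul_sum, hl, hr]
  ring

lemma cycLap_mulVec_const (hn : 3 ≤ n) (a : ℝ) : cycLap n *ᵥ (fun _ ↦ a) = 0 := by
  ext i; simp only [cycLap_mulVec hn, Pi.zero_apply]; ring

lemma dft_cycLap_mulVec (hn : 3 ≤ n) (v : ZMod n → ℝ) (k : ZMod n) :
    𝓕 (fun j ↦ ((cycLap n *ᵥ v) j : ℂ)) k =
      ((2 * Real.sin (π * k.val / n)) ^ 2 : ℝ) * 𝓕 (fun j ↦ (v j : ℂ)) k := by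
  have hfun : (fun j ↦ ((cycLap n *ᵥ v) j : ℂ)) = (2 : ℂ) • (fun j ↦ (v j : ℂ))
      - (fun j ↦ (v (j + -1) : ℂ)) - (fun j ↦ (v (j + 1) : ℂ)) := by
    ext j; simp [cycLap_mulVec hn, sub_eq_add_neg]
  rw [hfun, map_sub, map_sub, _root_.map_smul, Pi.sub_apply, Pi.sub_apply, Pi.smul_apply,
    dft_comp_add_right (fun j ↦ (v j : ℂ)), dft_comp_add_right (fun j ↦ (v j : ℂ)),
    ← two_sub_stdAddChar_sub_stdAddChar_neg, neg_one_mul, one_mul, smul_eq_mul, smul_eq_mul,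
    smul_eq_mul]
  ring

lemma sq_two_mul_sin_pi_div_le_of_cycLap_mulVec_eq_smul (hn : 3 ≤ n) {v : ZMod n → ℝ}
    {μ : ℝ} (hv : cycLap n *ᵥ v = μ • v) (hsum : ∑ j, v j = 0) (hne : v ≠ 0) :
    (2 * Real.sin (π / n)) ^ 2 ≤ μ := by
  set F := 𝓕 (fun j ↦ (v j : ℂ))
  obtain ⟨k, hk⟩ : ∃ k, F k ≠ 0 := by
    by_contra! hF
    refine hne (funext fun j ↦ ?_)
    simpa using congrFun ((map_eq_zero_iff 𝓕 (dft (N := n)).injective).mp (funext hF)) j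
  have hk0 : k ≠ 0 := by
    rintro rfl
    exact hk (by simp only [F, dft_apply_zero]; exact_mod_cast hsum)
  have hμ : μ = (2 * Real.sin (π * k.val / n)) ^ 2 := by
    have h := dft_cycLap_mulVec hn v k
    rw [hv] at h
    simp only [Pi.smul_apply, smul_eq_mul, Complex.ofReal_mul, dft_const_mul] at h
    exact_mod_cast mul_right_cancel₀ hk h
  have hval : 0 < k.val := Nat.pos_of_ne_zero ((val_ne_zero k).mpr hk0)
  have hsin : 0 ≤ Real.sin (π / n) := (Real.sin_pi_div_pos (by omega)).le
  rw [hμ]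
  gcongr
  exact Real.sin_pi_div_le_sin_pi_mul_div hval (val_lt k)

lemma dotProduct_eq_zero_of_cycLap_mulVec_eq_smul (hn : 3 ≤ n) {u v : ZMod n → ℝ} {μ : ℝ}
    (hu : cycLap n *ᵥ u = μ • u) (hμ : μ < (2 * Real.sin (π / n)) ^ 2)
    (hv : ∑ j, v j = 0) :
    u ⬝ᵥ v = 0 := by
  have eq_zero {w : ZMod n → ℝ} (hw : cycLap n *ᵥ w = μ • w) (hws : ∑ j, w j = 0) :
      w = 0 := by
    by_contra hne
    exact hμ.not_ge (sq_two_mul_sin_pi_div_le_of_cycLap_mulVec_eq_smul hn hw hws hne)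
  have hμu : μ * ∑ j, u j = 0 := by
    simpa [hu, Finset.mul_sum] using sum_cycLap_mulVec hn u
  by_cases hus : ∑ j, u j = 0
  · simp [eq_zero hu hus]
  -- Now `μ = 0`, so `u` minus its mean is a kernel vector with zero sum.
  have hμ0 : μ = 0 := (mul_eq_zero.mp hμu).resolve_right hus
  set a := (∑ j, u j) / n
  have hconst : u - (fun _ ↦ a) = 0 := by
    refine eq_zero ?_ ?_
    · rw [mulVec_sub, hu, cycLap_mulVec_const hn, hμ0, zero_smul, zero_smul, sub_zero]
    · simp [a, Finset.sum_sub_distrib, Finset.card_univ, ZMod.card,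
        mul_div_cancel₀ _ (NeZero.ne (n : ℝ))]
  rw [sub_eq_zero.mp hconst]
  simp [dotProduct, ← Finset.mul_sum, hv]

lemma le_dotProduct_psdSqrt_cycLap_mulVec (hn : 3 ≤ n) (hL : (cycLap n).PosSemidef)
    {v : ZMod n → ℝ} (hv : ∑ j, v j = 0) :
    2 * Real.sin (π / n) * (v ⬝ᵥ v) ≤ v ⬝ᵥ (psdSqrt hL *ᵥ v) :=
  le_dotProduct_psdSqrt_mulVec hL fun i ↦ (le_or_gt _ _).imp_right fun hi ↦
    dotProduct_eq_zero_of_cycLap_mulVec_eq_smul hn (hL.1.mulVec_eigenvectorBasis i) hi hv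

end CycleLaplacian

section CircularEmbedding

variable {n : ℕ} [NeZero n]

lemma circEmb_apply_zero (j : ZMod n) : circEmb n j 0 = √(2 / n) * (stdAddChar j).re := by
  rw [stdAddChar_eq_exp, Complex.exp_ofReal_mul_I_re]; rfl

lemma circEmb_apply_one (j : ZMod n) : circEmb n j 1 = √(2 / n) * (stdAddChar j).im := by
  rw [stdAddChar_eq_exp, Complex.exp_ofReal_mul_I_im]; rfl

lemma two_mul_stdAddChar_sub_stdAddChar_sub_stdAddChar (hn : 3 ≤ n) (j : ZMod n) :
    2 * stdAddChar j - stdAddChar (j - 1) - stdAddChar (j + 1) =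
      ((2 * Real.sin (π / n)) ^ 2 : ℝ) * stdAddChar j := by
  have : Fact (1 < n) := ⟨by omega⟩
  have h := two_sub_stdAddChar_sub_stdAddChar_neg (1 : ZMod n)
  rw [val_one, Nat.cast_one, mul_one] at h
  rw [← h, sub_eq_add_neg j, AddChar.map_add_eq_mul, AddChar.map_add_eq_mul]
  ring

lemma cycLap_mulVec_circEmb_col (hn : 3 ≤ n) (t : Fin 2) :
    cycLap n *ᵥ (circEmb n)ᵀ t = (2 * Real.sin (π / n)) ^ 2 • (circEmb n)ᵀ t := by
  ext j
  have h := two_mul_stdAddChar_sub_stdAddChar_sub_stdAddChar hn j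
  rw [cycLap_mulVec hn]
  fin_cases t
  · have hre := congrArg Complex.re h
    simp only [Complex.sub_re, Complex.mul_re, Complex.re_ofNat, Complex.im_ofNat,
      Complex.ofReal_re, Complex.ofReal_im, zero_mul, sub_zero] at hre
    simp only [Fin.zero_eta, transpose_apply, circEmb_apply_zero, Pi.smul_apply, smul_eq_mul]
    linear_combination √(2 / n) * hre
  · have him := congrArg Complex.im h
    simp only [Complex.sub_im, Complex.mul_im, Complex.re_ofNat, Complex.im_ofNat,
      Complex.ofReal_re, Complex.ofReal_im, zero_mul, add_zero] at him
    simp only [Fin.mk_one, transpose_apply, circEmb_apply_one, Pi.smul_apply, smul_eq_mul]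
    linear_combination √(2 / n) * him

lemma psdSqrt_cycLap_mulVec_circEmb_col (hn : 3 ≤ n) (hL : (cycLap n).PosSemidef) (t : Fin 2) :
    psdSqrt hL *ᵥ (circEmb n)ᵀ t = (2 * Real.sin (π / n)) • (circEmb n)ᵀ t :=
  (psdSqrt_posSemidef hL).mulVec_eq_smul_of_mul_self_mulVec
    (by linarith [Real.sin_pi_div_pos (n := n) (by omega)])
    (by rw [psdSqrt_mul_self]; exact cycLap_mulVec_circEmb_col hn t)

lemma transpose_circEmb_mul_circEmb (hn : 3 ≤ n) : (circEmb n)ᵀ * circEmb n = 1 := by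
  have hsq : ∑ j : ZMod n, stdAddChar j ^ 2 = 0 := by
    simpa [sq, ← AddChar.map_add_eq_mul, ← two_mul, mul_comm (2 : ZMod n)] using
      sum_stdAddChar_mul_eq_zero (two_ne_zero_of_three_le hn)
  have hre := congrArg Complex.re hsq
  have him := congrArg Complex.im hsq
  simp only [Complex.re_sum, Complex.im_sum, sq, Complex.mul_re, Complex.mul_im, Complex.zero_re,
    Complex.zero_im, Finset.sum_sub_distrib, Finset.sum_add_distrib] at hre him
  have hnorm : ∑ j : ZMod n, ((stdAddChar j).re ^ 2 + (stdAddChar j).im ^ 2) = n := by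
    simp [re_sq_add_im_sq_stdAddChar]
  rw [Finset.sum_add_distrib] at hnorm
  simp only [← sq] at hre
  have hre2 : ∑ j : ZMod n, (stdAddChar j).re ^ 2 = n / 2 := by linarith
  have him2 : ∑ j : ZMod n, (stdAddChar j).im ^ 2 = n / 2 := by linarith
  have hreim : ∑ j : ZMod n, (stdAddChar j).re * (stdAddChar j).im = 0 := by
    simpa [mul_comm (stdAddChar _).im] using him
  have hscale : √(2 / n) * √(2 / n) = 2 / n := Real.mul_self_sqrt (by positivity)
  have hn0 : (n : ℝ) ≠ 0 := NeZero.ne _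
  ext s t
  fin_cases s <;> fin_cases t <;>
    simp only [Fin.zero_eta, Fin.mk_one, mul_apply, transpose_apply, circEmb_apply_zero,
      circEmb_apply_one, mul_mul_mul_comm _ (stdAddChar _).re,
      mul_mul_mul_comm _ (stdAddChar _).im, hscale, ← Finset.mul_sum, ← sq] <;>
    simp [hre2, him2, hreim, mul_comm (stdAddChar _).im, hn0]

lemma transpose_circEmb_mulVec_one (hn : 3 ≤ n) :
    (circEmb n)ᵀ *ᵥ (fun _ ↦ (1 : ℝ)) = 0 := by
  have : Fact (1 < n) := ⟨by omega⟩
  have hsum : ∑ j : ZMod n, stdAddChar j = 0 := by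
    simpa using sum_stdAddChar_mul_eq_zero (one_ne_zero (α := ZMod n))
  have hre := congrArg Complex.re hsum
  have him := congrArg Complex.im hsum
  simp only [Complex.re_sum, Complex.im_sum, Complex.zero_re, Complex.zero_im] at hre him
  ext t
  fin_cases t <;> simp [mulVec, dotProduct, circEmb_apply_zero, circEmb_apply_one,
    ← Finset.mul_sum, hre, him]

end CircularEmbedding

/-- The circular embedding minimizes the `L_n^{1/2}`-energy:
`X_Cᵀ X_C = I₂`, `X_Cᵀ 𝟏ₙ = 0`, `Tr(X_Cᵀ L_n^{1/2} X_C) = 4 sin(π/n)`, and for every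
`X ∈ ℝ^{n×2}` with `Xᵀ X = I₂` and `Xᵀ 𝟏ₙ = 0` one has
`Tr(Xᵀ L_n^{1/2} X) ≥ 4 sin(π/n)`. -/
theorem circular_embedding_minimizes (n : ℕ) [NeZero n] (hn : 3 ≤ n)
    (hL : (cycLap n).PosSemidef) :
    (circEmb n)ᵀ * circEmb n = 1 ∧
    (circEmb n)ᵀ *ᵥ (fun _ => (1 : ℝ)) = 0 ∧
    ((circEmb n)ᵀ * psdSqrt hL * circEmb n).trace = 4 * Real.sin (π / n) ∧
    (∀ X : Matrix (ZMod n) (Fin 2) ℝ, Xᵀ * X = 1 → Xᵀ *ᵥ (fun _ => (1 : ℝ)) = 0 →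
      4 * Real.sin (π / n) ≤ (Xᵀ * psdSqrt hL * X).trace) := by
  have col_norm {X : Matrix (ZMod n) (Fin 2) ℝ} (hX : Xᵀ * X = 1) (t : Fin 2) :
      Xᵀ t ⬝ᵥ Xᵀ t = 1 := by
    have h := congrFun (congrFun hX t) t
    rwa [mul_apply', one_apply_eq] at h
  refine ⟨transpose_circEmb_mul_circEmb hn, transpose_circEmb_mulVec_one hn, ?_, ?_⟩
  · simp only [trace_transpose_mul_mul, Fin.sum_univ_two, psdSqrt_cycLap_mulVec_circEmb_col hn hL,
      dotProduct_smul, smul_eq_mul, col_norm (transpose_circEmb_mul_circEmb hn)]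
    ring
  · intro X hX hX1
    have hsum (t : Fin 2) : ∑ j, Xᵀ t j = 0 := by
      simpa [mulVec, dotProduct] using congrFun hX1 t
    calc 4 * Real.sin (π / n) = ∑ t, 2 * Real.sin (π / n) * (Xᵀ t ⬝ᵥ Xᵀ t) := by
          rw [Fin.sum_univ_two, col_norm hX, col_norm hX]; ring
      _ ≤ (Xᵀ * psdSqrt hL * X).trace := by
          rw [trace_transpose_mul_mul]
          exact Finset.sum_le_sum fun t _ ↦ le_dotProduct_psdSqrt_cycLap_mulVec hn hL (hsum t)
end
end
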